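/- Any two Tucker decompositions of the same tensor with scaled-orthonormal loadings differ by orthogonal transformations: if S = F ×1 A1 ×2 A2 ×3 A3 = F̃ ×1 Ã1 ×2 Ã2 ×3 Ã3 are two Tucker decompositions with full column-rank cores of ranks equal to the multilinear ranks of S, and Amᵀ Am = Ãmᵀ Ãm = I_m · Id_{Rm} for all m, then there exist orthogonal matrices Hm ∈ O(Rm) with Am = Ãm Hm for all m and F = F̃ ×1 H1ᵀ ×2 H2ᵀ ×3 H3ᵀ. -/

import Mathlib

/-!
Each matricization factors through both loadings, `S₍ₘ₎ = Aₘ Xₘ = Ãₘ X̃ₘ`. As `S₍ₘ₎` has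
rank `Rₘ`, `Xₘ` has a right inverse `P`, so `Aₘ = Ãₘ Hₘ` with `Hₘ = X̃ₘ P`; since `Ãₘ` and
`Aₘ = Ãₘ Hₘ` have the same Gram matrix `Iₘ • 1`, `Hₘ` is orthogonal. Undoing the decompositions
with the left inverses `Iₘ⁻¹ Ãₘᵀ` gives `F̃ = F ×₁ H₁ ×₂ H₂ ×₃ H₃`, hence
`F = F̃ ×₁ H₁ᵀ ×₂ H₂ᵀ ×₃ H₃ᵀ`.
-/

open Matrix

noncomputable section

/-- Tucker product F ×₁ A1 ×₂ A2 ×₃ A3. -/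
def tuck {I1 I2 I3 R1 R2 R3 : ℕ} (F : Fin R1 → Fin R2 → Fin R3 → ℝ)
    (A1 : Matrix (Fin I1) (Fin R1) ℝ) (A2 : Matrix (Fin I2) (Fin R2) ℝ)
    (A3 : Matrix (Fin I3) (Fin R3) ℝ) : Fin I1 → Fin I2 → Fin I3 → ℝ :=
  fun i1 i2 i3 => ∑ r1, ∑ r2, ∑ r3, A1 i1 r1 * A2 i2 r2 * A3 i3 r3 * F r1 r2 r3

/-- Mode-1 matricization. -/
def mat1 {I1 I2 I3 : ℕ} (S : Fin I1 → Fin I2 → Fin I3 → ℝ) :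
    Matrix (Fin I1) (Fin I2 × Fin I3) ℝ :=
  Matrix.of fun i p => S i p.1 p.2

/-- Mode-2 matricization. -/
def mat2 {I1 I2 I3 : ℕ} (S : Fin I1 → Fin I2 → Fin I3 → ℝ) :
    Matrix (Fin I2) (Fin I1 × Fin I3) ℝ :=
  Matrix.of fun i p => S p.1 i p.2

/-- Mode-3 matricization. -/
def mat3 {I1 I2 I3 : ℕ} (S : Fin I1 → Fin I2 → Fin I3 → ℝ) :
    Matrix (Fin I3) (Fin I1 × Fin I2) ℝ :=
  Matrix.of fun i p => S p.1 p.2 i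

theorem Matrix.exists_mul_eq_one_of_rank_eq_card {K r J : Type*} [Field K] [Fintype r]
    [DecidableEq r] [Fintype J] {X : Matrix r J K} (h : X.rank = Fintype.card r) :
    ∃ P : Matrix J r K, X * P = 1 := by
  refine mulVec_surjective_iff_exists_right_inverse.mp fun v => ?_
  have hrange : LinearMap.range X.mulVecLin = ⊤ :=
    Submodule.eq_top_of_finrank_eq (by rw [← Matrix.rank, h, Module.finrank_fintype_fun_eq_card])
  exact LinearMap.range_eq_top.mp hrange v

theorem inv_smul_transpose_mul_self_eq_one {K : Type*} [Field K] [CharZero K] {m n : ℕ}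
    {A : Matrix (Fin m) (Fin n) K} (hA : Aᵀ * A = (m : K) • 1) (hnm : n ≤ m) :
    ((m : K)⁻¹ • Aᵀ) * A = 1 := by
  obtain rfl | hm := eq_or_ne m 0
  · obtain rfl : n = 0 := Nat.le_zero.mp hnm
    exact Subsingleton.elim _ _
  · rw [smul_mul, hA, smul_smul, inv_mul_cancel₀ (Nat.cast_ne_zero.mpr hm), one_smul]

theorem exists_orthogonal_of_full_rank_factorizations {K m r J : Type*} [Field K] [Fintype m]
    [Fintype r] [DecidableEq r] [Fintype J] {c : K} {A At : Matrix m r K} {X Xt : Matrix r J K}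
    {M : Matrix m J K} (hgram : Aᵀ * A = Atᵀ * At) (hAt : (c • Atᵀ) * At = 1)
    (hM : M = A * X) (hMt : M = At * Xt) (hrank : M.rank = Fintype.card r) :
    ∃ H : Matrix r r K, Hᵀ * H = 1 ∧ A = At * H := by
  have hX : X.rank = Fintype.card r :=
    le_antisymm X.rank_le_card_height (by rw [← hrank, hM]; exact rank_mul_le_right A X)
  obtain ⟨P, hP⟩ := exists_mul_eq_one_of_rank_eq_card hX
  have hA : A = At * (Xt * P) := by
    rw [← Matrix.mul_assoc, ← hMt, hM, Matrix.mul_assoc, hP, Matrix.mul_one]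
  refine ⟨Xt * P, ?_, hA⟩
  calc (Xt * P)ᵀ * (Xt * P) = (Xt * P)ᵀ * ((c • Atᵀ) * At) * (Xt * P) := by
        rw [hAt, Matrix.mul_one]
    _ = (c • (At * (Xt * P))ᵀ) * (At * (Xt * P)) := by
        simp only [transpose_mul, Matrix.smul_mul, Matrix.mul_smul, Matrix.mul_assoc]
    _ = 1 := by rw [← hA, Matrix.smul_mul, hgram, ← Matrix.smul_mul, hAt]

open scoped Kronecker

section Tucker

variable {I1 I2 I3 R1 R2 R3 : ℕ}

theorem mat1_injective : Function.Injective (@mat1 I1 I2 I3) := fun _ _ h =>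
  funext fun i1 => funext fun i2 => funext fun i3 => congrFun (congrFun h i1) (i2, i3)

theorem mat1_tuck (F : Fin R1 → Fin R2 → Fin R3 → ℝ)
    (A1 : Matrix (Fin I1) (Fin R1) ℝ) (A2 : Matrix (Fin I2) (Fin R2) ℝ)
    (A3 : Matrix (Fin I3) (Fin R3) ℝ) :
    mat1 (tuck F A1 A2 A3) = A1 * (mat1 F * (A2 ⊗ₖ A3)ᵀ) := by
  ext i ⟨i2, i3⟩
  simp only [mat1, tuck, of_apply, Matrix.mul_apply, Fintype.sum_prod_type, transpose_apply,
    kroneckerMap_apply, Finset.mul_sum]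
  exact Finset.sum_congr rfl fun _ _ => Finset.sum_congr rfl fun _ _ =>
    Finset.sum_congr rfl fun _ _ => by ring

theorem mat2_tuck (F : Fin R1 → Fin R2 → Fin R3 → ℝ)
    (A1 : Matrix (Fin I1) (Fin R1) ℝ) (A2 : Matrix (Fin I2) (Fin R2) ℝ)
    (A3 : Matrix (Fin I3) (Fin R3) ℝ) :
    mat2 (tuck F A1 A2 A3) = A2 * (mat2 F * (A1 ⊗ₖ A3)ᵀ) := by
  ext i ⟨i1, i3⟩
  simp only [mat2, tuck, of_apply, Matrix.mul_apply, Fintype.sum_prod_type, transpose_apply,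
    kroneckerMap_apply, Finset.mul_sum]
  rw [Finset.sum_comm]
  exact Finset.sum_congr rfl fun _ _ => Finset.sum_congr rfl fun _ _ =>
    Finset.sum_congr rfl fun _ _ => by ring

theorem mat3_tuck (F : Fin R1 → Fin R2 → Fin R3 → ℝ)
    (A1 : Matrix (Fin I1) (Fin R1) ℝ) (A2 : Matrix (Fin I2) (Fin R2) ℝ)
    (A3 : Matrix (Fin I3) (Fin R3) ℝ) :
    mat3 (tuck F A1 A2 A3) = A3 * (mat3 F * (A1 ⊗ₖ A2)ᵀ) := by
  ext i ⟨i1, i2⟩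
  simp only [mat3, tuck, of_apply, Matrix.mul_apply, Fintype.sum_prod_type, transpose_apply,
    kroneckerMap_apply, Finset.mul_sum]
  rw [Finset.sum_congr rfl fun _ _ => Finset.sum_comm, Finset.sum_comm]
  exact Finset.sum_congr rfl fun _ _ => Finset.sum_congr rfl fun _ _ =>
    Finset.sum_congr rfl fun _ _ => by ring

theorem tuck_tuck {J1 J2 J3 : ℕ} (F : Fin R1 → Fin R2 → Fin R3 → ℝ)
    (B1 : Matrix (Fin J1) (Fin R1) ℝ) (B2 : Matrix (Fin J2) (Fin R2) ℝ)
    (B3 : Matrix (Fin J3) (Fin R3) ℝ) (A1 : Matrix (Fin I1) (Fin J1) ℝ)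
    (A2 : Matrix (Fin I2) (Fin J2) ℝ) (A3 : Matrix (Fin I3) (Fin J3) ℝ) :
    tuck (tuck F B1 B2 B3) A1 A2 A3 = tuck F (A1 * B1) (A2 * B2) (A3 * B3) := by
  apply mat1_injective
  rw [mat1_tuck, mat1_tuck, mat1_tuck, mul_kronecker_mul, transpose_mul]
  simp only [Matrix.mul_assoc]

theorem tuck_one_one_one (F : Fin R1 → Fin R2 → Fin R3 → ℝ) : tuck F 1 1 1 = F := by
  funext i1 i2 i3
  simp [tuck, one_apply]

theorem tuck_tuck_of_mul_eq_one {J1 J2 J3 : ℕ} (F : Fin R1 → Fin R2 → Fin R3 → ℝ)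
    {A1 : Matrix (Fin J1) (Fin R1) ℝ} {A2 : Matrix (Fin J2) (Fin R2) ℝ}
    {A3 : Matrix (Fin J3) (Fin R3) ℝ} {L1 : Matrix (Fin R1) (Fin J1) ℝ}
    {L2 : Matrix (Fin R2) (Fin J2) ℝ} {L3 : Matrix (Fin R3) (Fin J3) ℝ}
    (h1 : L1 * A1 = 1) (h2 : L2 * A2 = 1) (h3 : L3 * A3 = 1) :
    tuck (tuck F A1 A2 A3) L1 L2 L3 = F := by
  rw [tuck_tuck, h1, h2, h3, tuck_one_one_one]

end Tucker

theorem tucker_decompositions_differ_by_orthogonal_general {I1 I2 I3 R1 R2 R3 : ℕ}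
    (S : Fin I1 → Fin I2 → Fin I3 → ℝ)
    (F Ft : Fin R1 → Fin R2 → Fin R3 → ℝ)
    (A1 At1 : Matrix (Fin I1) (Fin R1) ℝ) (A2 At2 : Matrix (Fin I2) (Fin R2) ℝ)
    (A3 At3 : Matrix (Fin I3) (Fin R3) ℝ)
    (hdec : S = tuck F A1 A2 A3) (hdect : S = tuck Ft At1 At2 At3)
    (hA1 : A1ᵀ * A1 = (I1 : ℝ) • 1) (hA2 : A2ᵀ * A2 = (I2 : ℝ) • 1)
    (hA3 : A3ᵀ * A3 = (I3 : ℝ) • 1)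
    (hAt1 : At1ᵀ * At1 = (I1 : ℝ) • 1) (hAt2 : At2ᵀ * At2 = (I2 : ℝ) • 1)
    (hAt3 : At3ᵀ * At3 = (I3 : ℝ) • 1)
    (hS1 : (mat1 S).rank = R1) (hS2 : (mat2 S).rank = R2) (hS3 : (mat3 S).rank = R3) :
    ∃ (H1 : Matrix (Fin R1) (Fin R1) ℝ) (H2 : Matrix (Fin R2) (Fin R2) ℝ)
      (H3 : Matrix (Fin R3) (Fin R3) ℝ),
      H1ᵀ * H1 = 1 ∧ H2ᵀ * H2 = 1 ∧ H3ᵀ * H3 = 1 ∧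
      A1 = At1 * H1 ∧ A2 = At2 * H2 ∧ A3 = At3 * H3 ∧
      F = tuck Ft H1ᵀ H2ᵀ H3ᵀ := by
  have hL1 := inv_smul_transpose_mul_self_eq_one hAt1
    (by simpa [hS1] using (mat1 S).rank_le_card_height)
  have hL2 := inv_smul_transpose_mul_self_eq_one hAt2
    (by simpa [hS2] using (mat2 S).rank_le_card_height)
  have hL3 := inv_smul_transpose_mul_self_eq_one hAt3
    (by simpa [hS3] using (mat3 S).rank_le_card_height)
  obtain ⟨H1, hH1, rfl⟩ := exists_orthogonal_of_full_rank_factorizations (hA1.trans hAt1.symm) hL1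
    (hdec ▸ mat1_tuck F A1 A2 A3) (hdect ▸ mat1_tuck Ft At1 At2 At3) (by simp [hS1])
  obtain ⟨H2, hH2, rfl⟩ := exists_orthogonal_of_full_rank_factorizations (hA2.trans hAt2.symm) hL2
    (hdec ▸ mat2_tuck F _ A2 A3) (hdect ▸ mat2_tuck Ft At1 At2 At3) (by simp [hS2])
  obtain ⟨H3, hH3, rfl⟩ := exists_orthogonal_of_full_rank_factorizations (hA3.trans hAt3.symm) hL3
    (hdec ▸ mat3_tuck F _ _ A3) (hdect ▸ mat3_tuck Ft At1 At2 At3) (by simp [hS3])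
  refine ⟨H1, H2, H3, hH1, hH2, hH3, rfl, rfl, rfl, ?_⟩
  have hcore : Ft = tuck F H1 H2 H3 := by
    rw [← tuck_tuck_of_mul_eq_one Ft hL1 hL2 hL3, ← hdect, hdec, tuck_tuck]
    simp only [← Matrix.mul_assoc, hL1, hL2, hL3, Matrix.one_mul]
  rw [hcore, tuck_tuck_of_mul_eq_one F hH1 hH2 hH3]

/-- Two Tucker decompositions of the same tensor with scaled-orthonormal
loadings and full-rank cores differ by mode-wise orthogonal transformations. -/
theorem tucker_decompositions_differ_by_orthogonal {I1 I2 I3 R1 R2 R3 : ℕ}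
    (S : Fin I1 → Fin I2 → Fin I3 → ℝ)
    (F Ft : Fin R1 → Fin R2 → Fin R3 → ℝ)
    (A1 At1 : Matrix (Fin I1) (Fin R1) ℝ) (A2 At2 : Matrix (Fin I2) (Fin R2) ℝ)
    (A3 At3 : Matrix (Fin I3) (Fin R3) ℝ)
    (hdec : S = tuck F A1 A2 A3) (hdect : S = tuck Ft At1 At2 At3)
    (hA1 : A1ᵀ * A1 = (I1 : ℝ) • 1) (hA2 : A2ᵀ * A2 = (I2 : ℝ) • 1)
    (hA3 : A3ᵀ * A3 = (I3 : ℝ) • 1)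
    (hAt1 : At1ᵀ * At1 = (I1 : ℝ) • 1) (hAt2 : At2ᵀ * At2 = (I2 : ℝ) • 1)
    (hAt3 : At3ᵀ * At3 = (I3 : ℝ) • 1)
    (hS1 : (mat1 S).rank = R1) (hS2 : (mat2 S).rank = R2) (hS3 : (mat3 S).rank = R3)
    (hF1 : (mat1 F).rank = R1) (hF2 : (mat2 F).rank = R2) (hF3 : (mat3 F).rank = R3)
    (hFt1 : (mat1 Ft).rank = R1) (hFt2 : (mat2 Ft).rank = R2)
    (hFt3 : (mat3 Ft).rank = R3) :
    ∃ (H1 : Matrix (Fin R1) (Fin R1) ℝ) (H2 : Matrix (Fin R2) (Fin R2) ℝ)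
      (H3 : Matrix (Fin R3) (Fin R3) ℝ),
      H1ᵀ * H1 = 1 ∧ H2ᵀ * H2 = 1 ∧ H3ᵀ * H3 = 1 ∧
      A1 = At1 * H1 ∧ A2 = At2 * H2 ∧ A3 = At3 * H3 ∧
      F = tuck Ft H1ᵀ H2ᵀ H3ᵀ :=
  tucker_decompositions_differ_by_orthogonal_general S F Ft A1 At1 A2 At2 A3 At3 hdec hdect hA1 hA2
    hA3 hAt1 hAt2 hAt3 hS1 hS2 hS3
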